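/- Let T be a non-degenerate rooted phylogenetic X-tree, σ a total order on X, f the cluster marker map for T and σ, and v, w two distinct interior vertices of T. Then the vertex sets ∪L_{(T,f)}(v) and ∪L_{(T,f)}(w) intersect in at most one element. Moreover, an element x ∈ X lies in ∪L_{(T,f)}(v) ∩ ∪L_{(T,f)}(w) for some distinct interior vertices v, w if and only if x = f(L(u)) for some non-root interior vertex u of T. -/

import Mathlib

open scoped Classical

/-- A rooted `X`-tree on vertex type `V`: a finite rooted tree encoded by a parent
function, whose leaves (the vertices with no children) are bijectively labelled by `X`. -/
structure XTree (X V : Type) where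
  root : V
  parent : V → V
  parent_root : parent root = root
  reaches : ∀ v : V, ∃ n : ℕ, parent^[n] v = root
  leaf : X → V
  leaf_inj : Function.Injective leaf
  leaf_iff : ∀ v : V, (∀ w : V, parent w = v → w = v) ↔ v ∈ Set.range leaf

namespace XTree

variable {X V : Type}

/-- The children of a vertex. -/
def children (T : XTree X V) (v : V) : Set V := {w | T.parent w = v ∧ w ≠ v}

def IsLeaf (T : XTree X V) (v : V) : Prop := v ∈ Set.range T.leaf

def Interior (T : XTree X V) (v : V) : Prop := ¬ T.IsLeaf v

/-- Phylogenetic: root has at least two children, and no non-root vertex has exactly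
one child (no degree-two vertices apart from possibly the root). -/
def IsPhylo (T : XTree X V) : Prop :=
  2 ≤ (T.children T.root).ncard ∧
    ∀ v : V, v ≠ T.root → T.Interior v → 2 ≤ (T.children v).ncard

/-- `T.Desc v w` : `w` is a descendant of `v` (or equal to `v`). -/
def Desc (T : XTree X V) (v w : V) : Prop := ∃ n : ℕ, T.parent^[n] w = v

/-- The set of leaf labels below a vertex. -/
def leafSet (T : XTree X V) (v : V) : Set X := {x | T.Desc v (T.leaf x)}

/-- `v` is the last common ancestor of the set `S` of vertices. -/
def IsLCA (T : XTree X V) (v : V) (S : Set V) : Prop :=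
  (∀ w ∈ S, T.Desc v w) ∧ ∀ u : V, (∀ w ∈ S, T.Desc u w) → T.Desc u v

/-- Not a star tree: some interior vertex other than the root. -/
def NonDegenerate (T : XTree X V) : Prop := ∃ v : V, T.Interior v ∧ v ≠ T.root

end XTree

/-- A cord: a 2-element subset of `X`. -/
def IsCord {X : Type} (c : Set X) : Prop := ∃ a b : X, a ≠ b ∧ c = {a, b}

/-- The graph `Γ(L)` with vertex set `X` and edge set `L`. -/
def cordGraph {X : Type} (L : Set (Set X)) : SimpleGraph X where
  Adj a b := a ≠ b ∧ ({a, b} : Set X) ∈ L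
  symm := by
    constructor
    intro a b h
    exact ⟨Ne.symm h.1, by rw [Set.pair_comm]; exact h.2⟩
  loopless := by constructor; intro a h; exact h.1 rfl

/-- Topological lasso, via the child-edge graph characterization: for every interior
vertex, any two distinct child subtrees are joined by a cord of `L`. -/
def XTree.IsTopoLasso {X V : Type} (T : XTree X V) (L : Set (Set X)) : Prop :=
  ∀ v c₁ c₂ : V, c₁ ∈ T.children v → c₂ ∈ T.children v → c₁ ≠ c₂ →
    ∃ a b : X, a ∈ T.leafSet c₁ ∧ b ∈ T.leafSet c₂ ∧ ({a, b} : Set X) ∈ L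

/-- Set-inclusion minimal topological lasso. -/
def XTree.IsMinTopoLasso {X V : Type} (T : XTree X V) (L : Set (Set X)) : Prop :=
  T.IsTopoLasso L ∧ ∀ L' ⊆ L, T.IsTopoLasso L' → L' = L

/-- A nonempty vertex set inducing a connected subgraph with no cut vertex. -/
def GoodSet {α : Type} (G : SimpleGraph α) (B : Set α) : Prop :=
  B.Nonempty ∧ (G.induce B).Connected ∧
    ∀ v ∈ B, (B \ {v}).Nonempty → (G.induce (B \ {v})).Connected

/-- A block: a maximal connected induced subgraph without a cut vertex. -/
def IsBlock {α : Type} (G : SimpleGraph α) (B : Set α) : Prop :=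
  GoodSet G B ∧ ∀ C : Set α, GoodSet G C → B ⊆ C → B = C

/-- A block graph: every block is a clique. -/
def IsBlockGraph {α : Type} (G : SimpleGraph α) : Prop :=
  ∀ B : Set α, IsBlock G B → G.IsClique B

/-- A cut vertex: deleting it disconnects the graph. -/
def IsCutVtx {α : Type} (G : SimpleGraph α) (v : α) : Prop :=
  ¬ (G.induce {w | w ≠ v}).Connected

/-- Claw-free: no induced `K_{1,3}`. -/
def ClawFree {α : Type} (G : SimpleGraph α) : Prop :=
  ¬ ∃ v a b c : α, a ≠ b ∧ a ≠ c ∧ b ≠ c ∧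
    G.Adj v a ∧ G.Adj v b ∧ G.Adj v c ∧ ¬ G.Adj a b ∧ ¬ G.Adj a c ∧ ¬ G.Adj b c

/-- The child-edge graph `G(L,v)`: vertices are the children of `v` (equivalently
the child edges of `v`), two of them adjacent if a cord of `L` joins their subtrees. -/
def childGraph {X V : Type} (T : XTree X V) (L : Set (Set X)) (v : V) :
    SimpleGraph {c : V // c ∈ T.children v} where
  Adj c₁ c₂ := c₁ ≠ c₂ ∧ ∃ a b : X,
    a ∈ T.leafSet (c₁ : V) ∧ b ∈ T.leafSet (c₂ : V) ∧ ({a, b} : Set X) ∈ L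
  symm := by
    constructor
    rintro c₁ c₂ ⟨h, a, b, ha, hb, hm⟩
    exact ⟨Ne.symm h, b, a, hb, ha, by rw [Set.pair_comm]; exact hm⟩
  loopless := by constructor; rintro c ⟨h, -⟩; exact h rfl

/-- `cl(T)`: the clusters of non-root interior vertices. -/
def clSet {X V : Type} (T : XTree X V) : Set (Set X) :=
  {A | ∃ v : V, v ≠ T.root ∧ T.Interior v ∧ A = T.leafSet v}

/-- A cluster marker map for `T` and the ordering of `X`:
`f A` is the `σ`-least element of `A` not used as marker of a proper subcluster. -/
def IsClusterMarker {X V : Type} [LinearOrder X] (T : XTree X V) (f : Set X → X) : Prop :=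
  ∀ A ∈ clSet T,
    ((∃ B ∈ clSet T, B ⊂ A) →
      IsLeast (A \ {y | ∃ B ∈ clSet T, B ⊂ A ∧ f B = y}) (f A)) ∧
    ((¬ ∃ B ∈ clSet T, B ⊂ A) → IsLeast A (f A))

/-- The marker of a child `c` of an interior vertex: the label of `c` if `c` is a leaf,
and `f (L(c))` if `c` is interior. -/
def markRel {X V : Type} (T : XTree X V) (f : Set X → X) (c : V) (a : X) : Prop :=
  T.leaf a = c ∨ (T.Interior c ∧ a = f (T.leafSet c))

/-- `L_{(T,f)}(v)`: all cords between markers of distinct children of `v`. -/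
def lassoAt {X V : Type} (T : XTree X V) (f : Set X → X) (v : V) : Set (Set X) :=
  {c | ∃ c₁ c₂ : V, c₁ ∈ T.children v ∧ c₂ ∈ T.children v ∧ c₁ ≠ c₂ ∧
    ∃ a b : X, markRel T f c₁ a ∧ markRel T f c₂ b ∧ c = {a, b}}

/-- `L_{(T,f)}`: the union over all interior vertices of `L_{(T,f)}(v)`. -/
def lassoFull {X V : Type} (T : XTree X V) (f : Set X → X) : Set (Set X) :=
  {c | ∃ v : V, T.Interior v ∧ c ∈ lassoAt T f v}

/-- An equidistant proper edge-weighting of `T`, encoded by the height function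
`t v` = distance from `v` to any leaf below it (so all leaves are equidistant
from the root); properness: interior edges have positive weight. -/
def EquidistantProper {X V : Type} (T : XTree X V) (t : V → ℝ) : Prop :=
  (∀ x : X, t (T.leaf x) = 0) ∧ (∀ v : V, t v ≤ t (T.parent v)) ∧
    ∀ v : V, v ≠ T.root → T.Interior v → t v < t (T.parent v)

/-- Equivalence of two `X`-trees: a root-, parent- and labelling-preserving bijection. -/
def TreeEquiv {X V V' : Type} (T : XTree X V) (T' : XTree X V') : Prop :=
  ∃ φ : V ≃ V', φ T.root = T'.root ∧ (∀ v, φ (T.parent v) = T'.parent (φ v)) ∧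
    ∀ x, φ (T.leaf x) = T'.leaf x

/-- `S` is (equivalent to) the restriction `T|_Y`: the clusters of `S` are exactly the
nonempty traces on `Y` of the clusters of `T`. -/
def IsRestriction {X : Type} (Y : Set X) {V W : Type}
    (T : XTree X V) (S : XTree (↥Y) W) : Prop :=
  ∀ A : Set X, A ⊆ Y →
    ((∃ w : W, A = Subtype.val '' S.leafSet w) ↔ (A.Nonempty ∧ ∃ v : V, A = T.leafSet v ∩ Y))

/-- The restriction `L|_Y` of a set of cords of `X` to cords of `Y`. -/
def restrictLasso {X : Type} (Y : Set X) (L : Set (Set X)) : Set (Set ↥Y) :=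
  {c | ∃ a b : ↥Y, a ≠ b ∧ c = {a, b} ∧ ({(a : X), (b : X)} : Set X) ∈ L}

/-! The vertex set of `L_{(T,f)}(v)` is the set of markers of the children of `v`, and the
marker of a child `c` lies in its cluster `L(c)`. If `x` and `y` are markers at both `v` and
`w`, then `v` and `w` are comparable, say `w` lies below the child `c` of `v`; as the clusters
of the children of `v` are disjoint, both `x` and `y` are the marker of `c`. A common marker
cannot be the label of a leaf child at both vertices, so it is some `f(L(u))`; conversely
`f(L(u))` is a marker at the parent of `u` and at the parent of the leaf it labels. -/

namespace XTree

variable {X V : Type} {T : XTree X V}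

lemma eq_root_of_isPeriodicPt {v : V} {n : ℕ} (hn : 0 < n)
    (h : Function.IsPeriodicPt T.parent n v) : v = T.root := by
  obtain ⟨m, hm⟩ := T.reaches v
  have hle : m ≤ n * (m + 1) := le_trans (Nat.le_succ m) (Nat.le_mul_of_pos_left _ hn)
  calc v = T.parent^[n * (m + 1)] v := (h.mul_const (m + 1)).eq.symm
    _ = T.parent^[n * (m + 1) - m] (T.parent^[m] v) := by
      rw [← Function.iterate_add_apply, Nat.sub_add_cancel hle]
    _ = T.root := by rw [hm, Function.iterate_fixed T.parent_root]

lemma parent_ne_self {u : V} (h : u ≠ T.root) : T.parent u ≠ u :=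
  fun heq => h (T.eq_root_of_isPeriodicPt one_pos heq)

lemma child_ne_root {v c : V} (hc : c ∈ T.children v) : c ≠ T.root := by
  rintro rfl
  exact hc.2 (T.parent_root ▸ hc.1)

lemma mem_children_parent {u : V} (h : u ≠ T.root) : u ∈ T.children (T.parent u) :=
  ⟨rfl, (T.parent_ne_self h).symm⟩

lemma interior_parent {u : V} (h : u ≠ T.root) : T.Interior (T.parent u) := fun hleaf =>
  T.parent_ne_self h ((T.leaf_iff (T.parent u)).mpr hleaf u rfl).symm

lemma children_nontrivial (hph : T.IsPhylo) {v : V} (hv : T.Interior v) :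
    (T.children v).Nontrivial := by
  have h2 : 2 ≤ (T.children v).ncard := by
    by_cases h : v = T.root
    · exact h ▸ hph.1
    · exact hph.2 v h hv
  exact (Set.one_lt_ncard_iff_nontrivial_and_finite.mp h2).1

lemma Desc.refl (v : V) : T.Desc v v := ⟨0, rfl⟩

lemma Desc.trans {u v w : V} (h1 : T.Desc u v) (h2 : T.Desc v w) : T.Desc u w := by
  obtain ⟨n, hn⟩ := h1
  obtain ⟨m, hm⟩ := h2
  exact ⟨n + m, by rw [Function.iterate_add_apply, hm, hn]⟩

lemma desc_of_mem_children {v c : V} (hc : c ∈ T.children v) : T.Desc v c :=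
  ⟨1, hc.1⟩

lemma Desc.total {u v w : V} (hv : T.Desc v u) (hw : T.Desc w u) :
    T.Desc v w ∨ T.Desc w v := by
  obtain ⟨n, rfl⟩ := hv
  obtain ⟨m, rfl⟩ := hw
  rcases le_total n m with h | h
  · exact Or.inr ⟨m - n, by rw [← Function.iterate_add_apply, Nat.sub_add_cancel h]⟩
  · exact Or.inl ⟨n - m, by rw [← Function.iterate_add_apply, Nat.sub_add_cancel h]⟩

lemma desc_parent {u w : V} (h : T.Desc u w) (hne : w ≠ u) : T.Desc u (T.parent w) := by
  obtain ⟨n, hn⟩ := h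
  cases n with
  | zero => exact absurd hn hne
  | succ n => exact ⟨n, by rwa [← Function.iterate_succ_apply]⟩

lemma not_desc_parent {u : V} (h : u ≠ T.root) : ¬ T.Desc u (T.parent u) := by
  rintro ⟨n, hn⟩
  exact h (T.eq_root_of_isPeriodicPt n.succ_pos (by rwa [Function.IsPeriodicPt,
    Function.IsFixedPt, Function.iterate_succ_apply]))

lemma exists_child_desc {v w : V} (h : T.Desc v w) (hne : w ≠ v) :
    ∃ c ∈ T.children v, T.Desc c w := by
  obtain ⟨n, hn⟩ := h
  induction n generalizing w with
  | zero => exact absurd hn hne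
  | succ n ih =>
    by_cases hp : T.parent w = v
    · exact ⟨w, ⟨hp, hne⟩, Desc.refl w⟩
    · obtain ⟨c, hc, hcw⟩ := ih hp (by rwa [← Function.iterate_succ_apply])
      exact ⟨c, hc, hcw.trans ⟨1, rfl⟩⟩

lemma eq_of_mem_children_of_desc {v c c' : V} (hc : c ∈ T.children v)
    (hc' : c' ∈ T.children v) (h : T.Desc c c') : c = c' := by
  by_contra hne
  have hv : T.Desc c v := hc'.1 ▸ desc_parent h (Ne.symm hne)
  exact T.not_desc_parent (T.child_ne_root hc) (hc.1.symm ▸ hv)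

lemma ne_root_of_desc {u w : V} (hu : u ≠ T.root) (h : T.Desc u w) : w ≠ T.root := by
  rintro rfl
  obtain ⟨n, hn⟩ := h
  rw [Function.iterate_fixed T.parent_root] at hn
  exact hu hn.symm

lemma parent_ne_parent_of_desc {u w : V} (hu : u ≠ T.root) (h : T.Desc u w) (hne : w ≠ u) :
    T.parent u ≠ T.parent w := fun heq =>
  T.not_desc_parent hu (heq ▸ desc_parent h hne)

lemma eq_of_mem_leafSet_of_mem_children {v c c' : V} (hc : c ∈ T.children v)
    (hc' : c' ∈ T.children v) {x : X} (h : x ∈ T.leafSet c) (h' : x ∈ T.leafSet c') :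
    c = c' := by
  rcases Desc.total h h' with hd | hd
  · exact eq_of_mem_children_of_desc hc hc' hd
  · exact (eq_of_mem_children_of_desc hc' hc hd).symm

end XTree

open XTree

section Markers

variable {X V : Type} {T : XTree X V} {f : Set X → X}

def markers (T : XTree X V) (f : Set X → X) (v : V) : Set X :=
  {x | ∃ c ∈ T.children v, markRel T f c x}

lemma markRel.unique {c : V} {a b : X} (ha : markRel T f c a) (hb : markRel T f c b) :
    a = b := by
  rcases ha with ha | ⟨hi, rfl⟩ <;> rcases hb with hb | ⟨hi', rfl⟩
  · exact T.leaf_inj (ha.trans hb.symm)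
  · exact absurd ⟨a, ha⟩ hi'
  · exact absurd ⟨b, hb⟩ hi
  · rfl

lemma exists_markRel (T : XTree X V) (f : Set X → X) (c : V) : ∃ a : X, markRel T f c a := by
  by_cases h : T.IsLeaf c
  · obtain ⟨a, ha⟩ := h
    exact ⟨a, Or.inl ha⟩
  · exact ⟨f (T.leafSet c), Or.inr ⟨h, rfl⟩⟩

lemma sUnion_lassoAt (hph : T.IsPhylo) {v : V} (hv : T.Interior v) :
    ⋃₀ lassoAt T f v = markers T f v := by
  ext x
  constructor
  · rintro ⟨_, ⟨c₁, c₂, hc₁, hc₂, -, a, b, ha, hb, rfl⟩, hx⟩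
    rcases hx with rfl | rfl
    exacts [⟨c₁, hc₁, ha⟩, ⟨c₂, hc₂, hb⟩]
  · rintro ⟨c, hc, hx⟩
    obtain ⟨d, hd, hdc⟩ := (children_nontrivial hph hv).exists_ne c
    obtain ⟨b, hb⟩ := exists_markRel T f d
    exact ⟨{x, b}, ⟨c, d, hc, hd, hdc.symm, x, b, hx, hb, rfl⟩, Set.mem_insert x _⟩

lemma exists_eq_marker_of_mem_markers_inter {v w : V} (hvw : v ≠ w) {x : X}
    (hxv : x ∈ markers T f v) (hxw : x ∈ markers T f w) :
    ∃ u : V, u ≠ T.root ∧ T.Interior u ∧ x = f (T.leafSet u) := by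
  obtain ⟨c, hc, hmc | ⟨hci, hx⟩⟩ := hxv
  · obtain ⟨d, hd, hmd | ⟨hdi, hx⟩⟩ := hxw
    · exact absurd (hc.1.symm.trans (hmc.symm.trans hmd ▸ hd.1)) hvw
    · exact ⟨d, child_ne_root hd, hdi, hx⟩
  · exact ⟨c, child_ne_root hc, hci, hx⟩

variable [LinearOrder X]

lemma IsClusterMarker.mem (hf : IsClusterMarker T f) {A : Set X}
    (hA : A ∈ clSet T) : f A ∈ A := by
  by_cases h : ∃ B ∈ clSet T, B ⊂ A
  · exact ((hf A hA).1 h).1.1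
  · exact ((hf A hA).2 h).1

lemma markRel.mem_leafSet (hf : IsClusterMarker T f) {c : V}
    (hc : c ≠ T.root) {a : X} (h : markRel T f c a) : a ∈ T.leafSet c := by
  rcases h with h | ⟨hi, rfl⟩
  · exact ⟨0, h⟩
  · exact hf.mem ⟨c, hc, hi, rfl⟩

lemma mem_leafSet_of_mem_markers (hf : IsClusterMarker T f) {v : V} {x : X}
    (hx : x ∈ markers T f v) : x ∈ T.leafSet v := by
  obtain ⟨c, hc, hm⟩ := hx
  exact (desc_of_mem_children hc).trans (hm.mem_leafSet hf (child_ne_root hc))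

lemma markRel_of_mem_markers_of_desc (hf : IsClusterMarker T f) {v w c : V}
    (hc : c ∈ T.children v) (hcw : T.Desc c w) {x : X} (hxv : x ∈ markers T f v)
    (hxw : x ∈ markers T f w) : markRel T f c x := by
  obtain ⟨c', hc', hm⟩ := hxv
  have hxc : x ∈ T.leafSet c := hcw.trans (mem_leafSet_of_mem_markers hf hxw)
  have hxc' : x ∈ T.leafSet c' := hm.mem_leafSet hf (child_ne_root hc')
  exact eq_of_mem_leafSet_of_mem_children hc' hc hxc' hxc ▸ hm

lemma markers_inter_subsingleton (hf : IsClusterMarker T f) {v w : V} (hvw : v ≠ w) :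
    (markers T f v ∩ markers T f w).Subsingleton := by
  rintro x ⟨hxv, hxw⟩ y ⟨hyv, hyw⟩
  wlog hdesc : T.Desc v w generalizing v w
  · have hwv := (Desc.total (mem_leafSet_of_mem_markers hf hxv)
      (mem_leafSet_of_mem_markers hf hxw)).resolve_left hdesc
    exact this (Ne.symm hvw) hxw hxv hyw hyv hwv
  obtain ⟨c, hc, hcw⟩ := exists_child_desc hdesc (Ne.symm hvw)
  exact (markRel_of_mem_markers_of_desc hf hc hcw hxv hxw).unique
    (markRel_of_mem_markers_of_desc hf hc hcw hyv hyw)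

end Markers

theorem stmt17_general {X V : Type} [LinearOrder X] (T : XTree X V)
    (hph : T.IsPhylo) (f : Set X → X) (hf : IsClusterMarker T f) :
    (∀ v w : V, T.Interior v → T.Interior w → v ≠ w →
        ({x | ∃ c ∈ lassoAt T f v, x ∈ c} ∩
          {x | ∃ c ∈ lassoAt T f w, x ∈ c}).Subsingleton) ∧
      ∀ x : X,
        (∃ v w : V, T.Interior v ∧ T.Interior w ∧ v ≠ w ∧
            (∃ c ∈ lassoAt T f v, x ∈ c) ∧ ∃ c ∈ lassoAt T f w, x ∈ c) ↔
          ∃ u : V, u ≠ T.root ∧ T.Interior u ∧ x = f (T.leafSet u) := by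
  have hU : ∀ v, T.Interior v → ∀ x, (∃ c ∈ lassoAt T f v, x ∈ c) ↔ x ∈ markers T f v :=
    fun v hv x => by rw [← sUnion_lassoAt hph hv, Set.mem_sUnion]
  refine ⟨fun v w hv hw hvw x hx y hy => ?_, fun x => ⟨?_, ?_⟩⟩
  · exact markers_inter_subsingleton hf hvw ⟨(hU v hv x).1 hx.1, (hU w hw x).1 hx.2⟩
      ⟨(hU v hv y).1 hy.1, (hU w hw y).1 hy.2⟩
  · rintro ⟨v, w, hv, hw, hvw, hxv, hxw⟩
    exact exists_eq_marker_of_mem_markers_inter hvw ((hU v hv x).1 hxv) ((hU w hw x).1 hxw)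
  · rintro ⟨u, hur, hui, rfl⟩
    have hx : T.Desc u (T.leaf (f (T.leafSet u))) := hf.mem ⟨u, hur, hui, rfl⟩
    have hxu : T.leaf (f (T.leafSet u)) ≠ u := fun h => hui ⟨_, h⟩
    have hxr : T.leaf (f (T.leafSet u)) ≠ T.root := ne_root_of_desc hur hx
    exact ⟨T.parent u, T.parent (T.leaf _), interior_parent hur, interior_parent hxr,
      parent_ne_parent_of_desc hur hx hxu,
      (hU _ (interior_parent hur) _).2 ⟨u, mem_children_parent hur, Or.inr ⟨hui, rfl⟩⟩,
      (hU _ (interior_parent hxr) _).2 ⟨_, mem_children_parent hxr, Or.inl rfl⟩⟩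

/-- for distinct interior vertices `v, w`, the vertex sets of
`L_{(T,f)}(v)` and `L_{(T,f)}(w)` meet in at most one element; and `x` lies in two such
vertex sets iff `x = f(L(u))` for some non-root interior vertex `u`. -/
theorem stmt17 {X V : Type} [Fintype X] [Fintype V] [LinearOrder X] (T : XTree X V)
    (hph : T.IsPhylo) (hX : 3 ≤ Fintype.card X) (hnd : T.NonDegenerate)
    (f : Set X → X) (hf : IsClusterMarker T f) :
    (∀ v w : V, T.Interior v → T.Interior w → v ≠ w →
        ({x | ∃ c ∈ lassoAt T f v, x ∈ c} ∩
          {x | ∃ c ∈ lassoAt T f w, x ∈ c}).Subsingleton) ∧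
      ∀ x : X,
        (∃ v w : V, T.Interior v ∧ T.Interior w ∧ v ≠ w ∧
            (∃ c ∈ lassoAt T f v, x ∈ c) ∧ ∃ c ∈ lassoAt T f w, x ∈ c) ↔
          ∃ u : V, u ≠ T.root ∧ T.Interior u ∧ x = f (T.leafSet u) :=
  stmt17_general T hph f hf
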